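/- Suppose L∂_j b_i = ρ h_{ij} where h_{ij} = L L_{ij} (angular metric tensor, with L_{ij} = ∂²L/∂y^i∂y^j), τ = L/β, m_i = b_i − (1/τ) l_i with l_i = ∂L/∂y^i. Then the second derivatives of *L = L²/β satisfy *L_{ij} = (2τ − ρτ²) L_{ij} + (2τ²/β) m_i m_j. -/

import Mathlib

/-! With `τ = L / β` one has `∂_i(L² / β) = 2τ l_i - τ² b_i` and
`∂_j τ = (l_j - τ b_j) / β`. Differentiating once more, the h-vector condition turns
`-τ² β_{ij}` into `-ρτ² L_{ij}`, and the remaining terms combine into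
`(2 / β)(l_i - τ b_i)(l_j - τ b_j) = (2τ² / β) m_i m_j`. -/

open Topology

section SecondDerivativeOfSqDiv

variable {E : Type*} [NormedAddCommGroup E] [NormedSpace ℝ E] {f g : E → ℝ} {f' g' : E →L[ℝ] ℝ}
  {x : E}

theorem HasFDerivAt.div (hf : HasFDerivAt f f' x) (hg : HasFDerivAt g g' x) (hx : g x ≠ 0) :
    HasFDerivAt (fun z => f z / g z) ((g x)⁻¹ • (f' - (f x / g x) • g')) x := by
  have h := hf.fun_mul ((hasDerivAt_inv hx).comp_hasFDerivAt x hg)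
  simp only [Function.comp_def, ← div_eq_mul_inv] at h
  refine h.congr_fderiv ?_
  ext v
  simp only [add_apply, smul_apply, neg_apply, sub_apply, neg_smul, smul_neg,
    smul_eq_mul]
  field_simp
  ring

theorem HasFDerivAt.sq_div (hf : HasFDerivAt f f' x) (hg : HasFDerivAt g g' x) (hx : g x ≠ 0) :
    HasFDerivAt (fun z => f z ^ 2 / g z) ((2 * (f x / g x)) • f' - (f x / g x) ^ 2 • g') x := by
  convert (hf.pow 2).div hg hx using 1
  ext v
  simp only [sub_apply, smul_apply, smul_eq_mul, Nat.add_one_sub_one, pow_one,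
    nsmul_eq_mul, Nat.cast_ofNat]
  field_simp

theorem fderiv_sq_div_apply_eventuallyEq (hf : ContDiffAt ℝ 1 f x) (hg : ContDiffAt ℝ 1 g x)
    (hx : g x ≠ 0) (v : E) :
    (fun z => fderiv ℝ (fun z => f z ^ 2 / g z) z v) =ᶠ[𝓝 x]
      fun z => 2 * (f z / g z) * fderiv ℝ f z v - (f z / g z) ^ 2 * fderiv ℝ g z v := by
  filter_upwards [hf.eventually (by simp), hg.eventually (by simp),
    hg.continuousAt.eventually_ne hx] with z hfz hgz hz
  rw [((hfz.differentiableAt one_ne_zero).hasFDerivAt.sq_div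
    (hgz.differentiableAt one_ne_zero).hasFDerivAt hz).fderiv]
  simp

theorem ContDiffAt.differentiableAt_fderiv_apply (hf : ContDiffAt ℝ 2 f x) (v : E) :
    DifferentiableAt ℝ (fun z => fderiv ℝ f z v) x :=
  ((hf.fderiv_right (m := 1) le_rfl).differentiableAt one_ne_zero).clm_apply
    (differentiableAt_const v)

theorem fderiv_fderiv_sq_div_apply (hf : ContDiffAt ℝ 2 f x) (hg : ContDiffAt ℝ 2 g x)
    (hx : g x ≠ 0) (v w : E) :
    fderiv ℝ (fun z => fderiv ℝ (fun z => f z ^ 2 / g z) z v) x w =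
      2 * (f x / g x) * fderiv ℝ (fun z => fderiv ℝ f z v) x w
        - (f x / g x) ^ 2 * fderiv ℝ (fun z => fderiv ℝ g z v) x w
        + 2 / g x * (fderiv ℝ f x v - f x / g x * fderiv ℝ g x v)
          * (fderiv ℝ f x w - f x / g x * fderiv ℝ g x w) := by
  have hquot := (hf.differentiableAt two_ne_zero).hasFDerivAt.div
    (hg.differentiableAt two_ne_zero).hasFDerivAt hx
  have hfirst :=
    ((hquot.const_mul 2).fun_mul (hf.differentiableAt_fderiv_apply v).hasFDerivAt).fun_sub
      ((hquot.pow 2).fun_mul (hg.differentiableAt_fderiv_apply v).hasFDerivAt)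
  rw [(fderiv_sq_div_apply_eventuallyEq (hf.of_le one_le_two) (hg.of_le one_le_two) hx
    v).fderiv_eq, hfirst.fderiv]
  simp only [sub_apply, add_apply, smul_apply, smul_eq_mul, Nat.add_one_sub_one,
    pow_one, nsmul_eq_mul, Nat.cast_ofNat]
  field_simp
  ring

end SecondDerivativeOfSqDiv

theorem kropina_second_derivative_general {n : ℕ}
    (L β : (Fin n → ℝ) → ℝ) (y : Fin n → ℝ)
    (hL : ContDiffAt ℝ 2 L y) (hβ : ContDiffAt ℝ 2 β y)
    (hLne : L y ≠ 0) (hβne : β y ≠ 0)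
    (l b : Fin n → ℝ)
    (hl : ∀ i, l i = fderiv ℝ L y (Pi.single i 1))
    (hb : ∀ i, b i = fderiv ℝ β y (Pi.single i 1))
    (Lij βij : Fin n → Fin n → ℝ)
    (hLij : ∀ i j, Lij i j =
      fderiv ℝ (fun z => fderiv ℝ L z (Pi.single i 1)) y (Pi.single j 1))
    (hβij : ∀ i j, βij i j =
      fderiv ℝ (fun z => fderiv ℝ β z (Pi.single i 1)) y (Pi.single j 1))
    (ρ : ℝ)
    -- h-vector condition `L ∂_j b_i = ρ h_{ij}` with `h_{ij} = L L_{ij}`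
    (hhvec : ∀ i j, L y * βij i j = ρ * (L y * Lij i j))
    (τ : ℝ) (hτ : τ = L y / β y)
    (m : Fin n → ℝ) (hm : ∀ i, m i = b i - (β y / L y) * l i)
    (starL : (Fin n → ℝ) → ℝ) (hstarL : ∀ z, starL z = (L z) ^ 2 / β z) :
    ∀ i j, fderiv ℝ (fun z => fderiv ℝ starL z (Pi.single i 1)) y (Pi.single j 1) =
      (2 * τ - ρ * τ ^ 2) * Lij i j + (2 * τ ^ 2 / β y) * m i * m j := by
  intro i j
  have hβij_eq : βij i j = ρ * Lij i j :=
    mul_left_cancel₀ hLne (by rw [hhvec, mul_left_comm])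
  rw [funext hstarL, fderiv_fderiv_sq_div_apply hL hβ hβne, ← hl, ← hl, ← hb, ← hb, ← hLij,
    ← hβij, hβij_eq, hτ, hm, hm]
  field_simp
  ring

/-- Second partial derivatives of the Kropina change with an h-vector:
`*L_{ij} = (2τ − ρτ²) L_{ij} + (2τ²/β) m_i m_j`, where `b_i = ∂_i β` satisfies the
h-vector condition `L ∂_j b_i = ρ h_{ij}` with `h_{ij} = L L_{ij}`,
`τ = L/β`, `m_i = b_i − (β/L) l_i`, `l_i = ∂_i L`. -/
theorem kropina_second_derivative {n : ℕ}
    (L β : (Fin n → ℝ) → ℝ) (y : Fin n → ℝ)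
    (hL : ContDiffAt ℝ 2 L y) (hβ : ContDiffAt ℝ 2 β y)
    (hLne : L y ≠ 0) (hβne : β y ≠ 0)
    (l b : Fin n → ℝ)
    (hl : ∀ i, l i = fderiv ℝ L y (Pi.single i 1))
    (hb : ∀ i, b i = fderiv ℝ β y (Pi.single i 1))
    -- Euler relations from positive 1-homogeneity of `L` and `β`
    (hEulerL : ∑ i, l i * y i = L y) (hEulerβ : ∑ i, b i * y i = β y)
    (Lij βij : Fin n → Fin n → ℝ)
    (hLij : ∀ i j, Lij i j =
      fderiv ℝ (fun z => fderiv ℝ L z (Pi.single i 1)) y (Pi.single j 1))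
    (hβij : ∀ i j, βij i j =
      fderiv ℝ (fun z => fderiv ℝ β z (Pi.single i 1)) y (Pi.single j 1))
    (ρ : ℝ)
    -- h-vector condition `L ∂_j b_i = ρ h_{ij}` with `h_{ij} = L L_{ij}`
    (hhvec : ∀ i j, L y * βij i j = ρ * (L y * Lij i j))
    (τ : ℝ) (hτ : τ = L y / β y)
    (m : Fin n → ℝ) (hm : ∀ i, m i = b i - (β y / L y) * l i)
    (starL : (Fin n → ℝ) → ℝ) (hstarL : ∀ z, starL z = (L z) ^ 2 / β z) :
    ∀ i j, fderiv ℝ (fun z => fderiv ℝ starL z (Pi.single i 1)) y (Pi.single j 1) =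
      (2 * τ - ρ * τ ^ 2) * Lij i j + (2 * τ ^ 2 / β y) * m i * m j :=
  kropina_second_derivative_general L β y hL hβ hLne hβne l b hl hb Lij βij hLij hβij ρ hhvec τ hτ m
    hm starL hstarL
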